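/- Let G be a graph with shortest-path metric dist, let s, t be vertices and P a shortest s–t path. Let a, p, z be vertices on P in order from s, with dist(s,z) = dist(s,p) − 3. Let π(s) and π(u) denote vertices of a set A with dist(s,π(s)) minimal over A, and suppose dist(s,p) = dist(s,π(s)). Let u be a vertex with dist(a,u) ≤ 1 and dist(s,a) + dist(a,z) = dist(s,z) (a lies on P between s and z). If dist(u, π(u)) ≤ 1 + dist(a,z) for the closest A-vertex π(u) to u, then dist(s, π(u)) ≤ dist(s,π(s)) − 1, contradicting minimality of π(s); hence dist(u, π(u)) > 1 + dist(a,z), i.e., dist(u,z) < dist(u,π(u)). -/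
import Mathlib


/-- Lemma 3.7 (lem:es): with `s, a, z, p` in this order on a shortest path,
`dist(s,z) = dist(s,p) - 3`, `dist(s,p) = dist(s,π(s))` where `π(s)` is a
closest vertex of `A` to `s`, and `dist(a,u) ≤ 1`, the closest vertex `π(u)`
of `A` to `u` satisfies `dist(u,z) < dist(u,π(u))`, i.e. `z ∈ ball(u)`. -/
theorem stmt_6 {V : Type*} (G : SimpleGraph V) (hG : G.Connected)
    (A : Set V) (s a z p u πs πu : V)
    (hπsA : πs ∈ A) (hπs : ∀ x ∈ A, G.dist s πs ≤ G.dist s x)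
    (hπuA : πu ∈ A) (hπu : ∀ x ∈ A, G.dist u πu ≤ G.dist u x)
    (hzp : G.dist s z + 3 = G.dist s p)
    (haz : G.dist s a + G.dist a z = G.dist s z)
    (hau : G.dist a u ≤ 1)
    (hsp : G.dist s p = G.dist s πs) :
    G.dist u z < G.dist u πu := by
  by_contra h
  push_neg at h
  have t1 : G.dist u z ≤ G.dist u a + G.dist a z := hG.dist_triangle
  have t2 : G.dist s πu ≤ G.dist s u + G.dist u πu := hG.dist_triangle
  have t3 : G.dist s u ≤ G.dist s a + G.dist a u := hG.dist_triangle
  have hc : G.dist u a = G.dist a u := G.dist_comm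
  have := hπs πu hπuA
  omega
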